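/- Let n ≥ 1. In Minkowski space E^{n+1}_1, the dual cone of the closed future cone is the closed past cone, and the dual cone of the closed past cone is the closed future cone: F* = P and P* = F. -/

import Mathlib

/-!
Reverse Cauchy–Schwarz: for `x, y ∈ F`, the spatial Cauchy–Schwarz inequality together with
`|x⃗| ≤ xₜ`, `|y⃗| ≤ yₜ` gives `x⃗ · y⃗ ≤ xₜ yₜ`, i.e. `⟪x, y⟫ ≤ 0`; hence `P ⊆ F*`. Conversely,
testing `x* = (s, t) ∈ F*` against the future vectors `(0, 1)` and `(-s, |s|)` gives `t ≤ 0` and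
`|s|² ≤ -t |s|`, so `-x* ∈ F`. Finally `(-K)* = -K*` turns `F* = P` into `P* = F`.
-/

open Set Pointwise

/-- The Minkowski bilinear form on `ℝ^(n+1)`:
`⟪x,y⟫ = x₁y₁ + ⋯ + xₙyₙ − x_{n+1}y_{n+1}`. -/
def mink {n : ℕ} (x y : EuclideanSpace ℝ (Fin (n + 1))) : ℝ :=
  (∑ i : Fin n, x i.castSucc * y i.castSucc) - x (Fin.last n) * y (Fin.last n)

/-- The closed future cone in Minkowski space. -/
def futureCone (n : ℕ) : Set (EuclideanSpace ℝ (Fin (n + 1))) :=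
  {v | mink v v ≤ 0 ∧ 0 ≤ v (Fin.last n)}

/-- The closed past cone in Minkowski space: `P = -F`. -/
def pastCone (n : ℕ) : Set (EuclideanSpace ℝ (Fin (n + 1))) :=
  -futureCone n

/-- The dual cone of a set with respect to the Minkowski form. -/
def minkDual {n : ℕ} (K : Set (EuclideanSpace ℝ (Fin (n + 1)))) :
    Set (EuclideanSpace ℝ (Fin (n + 1))) :=
  {xs | ∀ x ∈ K, 0 ≤ mink xs x}

variable {n : ℕ}

lemma mink_neg_left (x y : EuclideanSpace ℝ (Fin (n + 1))) : mink (-x) y = -mink x y := by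
  simp only [mink, PiLp.neg_apply, neg_mul, Finset.sum_neg_distrib]
  ring

lemma mink_neg_right (x y : EuclideanSpace ℝ (Fin (n + 1))) : mink x (-y) = -mink x y := by
  simp only [mink, PiLp.neg_apply, mul_neg, Finset.sum_neg_distrib]
  ring

lemma mink_toLp_snoc (x : EuclideanSpace ℝ (Fin (n + 1))) (s : Fin n → ℝ) (t : ℝ) :
    mink x (WithLp.toLp 2 (Fin.snoc s t : Fin (n + 1) → ℝ)) =
      ∑ i, x i.castSucc * s i - x (Fin.last n) * t := by
  simp [mink]

lemma mem_futureCone_iff {v : EuclideanSpace ℝ (Fin (n + 1))} :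
    v ∈ futureCone n ↔
      ∑ i : Fin n, v i.castSucc ^ 2 ≤ v (Fin.last n) ^ 2 ∧ 0 ≤ v (Fin.last n) := by
  simp only [futureCone, mink, mem_ofPred_eq, sq, sub_nonpos]

lemma toLp_snoc_mem_futureCone {s : Fin n → ℝ} {t : ℝ} (hs : ∑ i, s i ^ 2 ≤ t ^ 2)
    (ht : 0 ≤ t) :
    WithLp.toLp 2 (Fin.snoc s t : Fin (n + 1) → ℝ) ∈ futureCone n := by
  simpa [mem_futureCone_iff] using ⟨hs, ht⟩

lemma mink_nonpos_of_mem_futureCone {x y : EuclideanSpace ℝ (Fin (n + 1))}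
    (hx : x ∈ futureCone n) (hy : y ∈ futureCone n) : mink x y ≤ 0 := by
  rw [mem_futureCone_iff] at hx hy
  obtain ⟨hx, hx₀⟩ := hx
  obtain ⟨hy, hy₀⟩ := hy
  have hsq : (∑ i : Fin n, x i.castSucc * y i.castSucc) ^ 2 ≤
      (x (Fin.last n) * y (Fin.last n)) ^ 2 :=
    calc _ ≤ (∑ i : Fin n, x i.castSucc ^ 2) * ∑ i : Fin n, y i.castSucc ^ 2 :=
          Finset.sum_mul_sq_le_sq_mul_sq _ _ _
      _ ≤ x (Fin.last n) ^ 2 * y (Fin.last n) ^ 2 :=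
          mul_le_mul hx hy (Finset.sum_nonneg fun i _ => sq_nonneg _) (sq_nonneg _)
      _ = _ := (mul_pow _ _ _).symm
  exact sub_nonpos.2 (abs_le_of_sq_le_sq' hsq (mul_nonneg hx₀ hy₀)).2

lemma minkDual_neg (K : Set (EuclideanSpace ℝ (Fin (n + 1)))) :
    minkDual (-K) = -minkDual K := by
  ext xs
  simp only [minkDual, mem_neg, mem_ofPred_eq]
  constructor
  · intro h x hx
    simpa [mink_neg_left, mink_neg_right] using h (-x) (by rwa [neg_neg])
  · intro h x hx
    simpa [mink_neg_left, mink_neg_right] using h (-x) hx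

lemma pastCone_subset_minkDual_futureCone : pastCone n ⊆ minkDual (futureCone n) := by
  intro xs hxs x hx
  have := mink_nonpos_of_mem_futureCone hxs hx
  rw [mink_neg_left] at this
  linarith

lemma minkDual_futureCone_subset_pastCone : minkDual (futureCone n) ⊆ pastCone n := by
  intro xs hxs
  set s : Fin n → ℝ := fun i => xs i.castSucc
  set t := xs (Fin.last n)
  set S := ∑ i, s i ^ 2
  have hS : 0 ≤ S := Finset.sum_nonneg fun i _ => sq_nonneg (s i)
  have ht : t ≤ 0 := by
    have := hxs _ (toLp_snoc_mem_futureCone (s := 0) (t := 1) (by simp) zero_le_one)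
    simpa [mink_toLp_snoc] using this
  have hSt : S + t * √S ≤ 0 := by
    have := hxs _ (toLp_snoc_mem_futureCone (s := -s) (t := √S)
      (by simp [Real.sq_sqrt hS, S]) (Real.sqrt_nonneg S))
    have hsum : ∑ i, xs i.castSucc * s i = S := by simp only [S, s, sq]
    simp only [mink_toLp_snoc, Pi.neg_apply, mul_neg, Finset.sum_neg_distrib, hsum] at this
    linarith
  rw [pastCone, mem_neg, mem_futureCone_iff]
  simp only [PiLp.neg_apply, neg_sq]
  refine ⟨?_, by linarith⟩
  nlinarith [Real.sq_sqrt hS, Real.sqrt_nonneg S]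

theorem minkDual_futureCone : minkDual (futureCone n) = pastCone n :=
  minkDual_futureCone_subset_pastCone.antisymm pastCone_subset_minkDual_futureCone

theorem minkDual_pastCone : minkDual (pastCone n) = futureCone n := by
  rw [pastCone, minkDual_neg, minkDual_futureCone, pastCone, neg_neg]

theorem stmt_5 (n : ℕ) :
    minkDual (futureCone n) = pastCone n ∧ minkDual (pastCone n) = futureCone n :=
  ⟨minkDual_futureCone, minkDual_pastCone⟩
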